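/- For every purely imaginary quaternion t ∈ Im ℍ there exists a piecewise-C¹ horizontal curve γ : [0,1] → ℍ × Im ℍ with γ(0) = (0, 0) and γ(1) = (0, t). -/

import Mathlib

open Quaternion Set

/-- The horizontality condition at a point of differentiability:
`β′(l) = −2 Im(α′(l) · conj(α(l)))`. -/
def HorizontalAt (α β : ℝ → ℍ[ℝ]) (l : ℝ) : Prop :=
  ∃ a' b' : ℍ[ℝ], HasDerivAt α a' l ∧ HasDerivAt β b' l ∧
    b' = (-2 : ℝ) • Quaternion.im (a' * star (α l))

/-- A piecewise-C¹ horizontal curve `(α, β) : [a, b] → ℍ × Im ℍ`: it is continuous,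
takes vertical values in the imaginary quaternions, and away from a finite set of
points it is differentiable with continuous derivative and satisfies the
horizontality condition. -/
def IsPiecewiseHorizontal (α β : ℝ → ℍ[ℝ]) (a b : ℝ) : Prop :=
  ContinuousOn (fun l => (α l, β l)) (Icc a b) ∧
  (∀ l ∈ Icc a b, (β l).re = 0) ∧
  ∃ F : Finset ℝ,
    (∀ l ∈ Icc a b, l ∉ F → HorizontalAt α β l) ∧
    ContinuousOn (fun l => deriv α l) (Icc a b \ F)

/-! A loop `α = x + y u` in the plane spanned by `1` and a purely imaginary `u` has
`Im(α' ᾱ) = (x y' - x' y) u`, so its horizontal lift moves only along `u`, by `-2` times the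
integral of `x y' - x' y`, i.e. by `-4` times the signed area the loop encloses. The unit circle
through `0`, traversed once, closes up in `ℍ` and its lift ends at `-4π u`; take `u = -t / (4π)`. -/

open Real

lemma Quaternion.im_coe_add_smul_mul_star {u : ℍ[ℝ]} (hu : u.re = 0) (a b c d : ℝ) :
    im (((a : ℍ[ℝ]) + b • u) * star ((c : ℍ[ℝ]) + d • u)) = (b * c - a * d) • u := by
  ext <;> simp [imI_mul, imJ_mul, imK_mul, hu] <;> ring

section PlaneCurve

variable {x y : ℝ → ℝ} {x' y' l : ℝ}

lemma hasDerivAt_coe_add_smul (u : ℍ[ℝ]) (hx : HasDerivAt x x' l) (hy : HasDerivAt y y' l) :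
    HasDerivAt (fun s ↦ (x s : ℍ[ℝ]) + y s • u) ((x' : ℍ[ℝ]) + y' • u) l := by
  have hcoe : HasDerivAt (fun s ↦ (x s : ℍ[ℝ])) (x' : ℍ[ℝ]) l := by
    simpa [← coe_mul_eq_smul] using hx.smul_const (1 : ℍ[ℝ])
  exact hcoe.add (hy.smul_const u)

lemma horizontalAt_coe_add_smul {u : ℍ[ℝ]} (hu : u.re = 0) {z : ℝ → ℝ}
    (hx : HasDerivAt x x' l) (hy : HasDerivAt y y' l)
    (hz : HasDerivAt z (2 * (x' * y l - x l * y')) l) :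
    HorizontalAt (fun s ↦ (x s : ℍ[ℝ]) + y s • u) (fun s ↦ z s • u) l := by
  refine ⟨_, _, hasDerivAt_coe_add_smul u hx hy, hz.smul_const u, ?_⟩
  rw [Quaternion.im_coe_add_smul_mul_star hu, smul_smul]
  congr 1
  ring

end PlaneCurve

lemma isPiecewiseHorizontal_of_forall_horizontalAt {α β : ℝ → ℍ[ℝ]}
    (hβ : ∀ l, (β l).re = 0) (h : ∀ l, HorizontalAt α β l) (hα' : Continuous (deriv α))
    (a b : ℝ) : IsPiecewiseHorizontal α β a b := by
  have hcont : ∀ l, ContinuousAt (fun l ↦ (α l, β l)) l := fun l ↦ by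
    obtain ⟨_, _, hα, hβ, -⟩ := h l
    exact hα.continuousAt.prodMk hβ.continuousAt
  exact ⟨(continuous_iff_continuousAt.2 hcont).continuousOn, fun l _ ↦ hβ l, ∅,
    fun l _ _ ↦ h l, hα'.continuousOn⟩

lemma hasDerivAt_cos_two_pi_mul (l : ℝ) :
    HasDerivAt (fun s ↦ cos (2 * π * s)) (-(2 * π * sin (2 * π * l))) l := by
  simpa [mul_comm] using ((hasDerivAt_id l).const_mul (2 * π)).cos

lemma hasDerivAt_sin_two_pi_mul (l : ℝ) :
    HasDerivAt (fun s ↦ sin (2 * π * s)) (2 * π * cos (2 * π * l)) l := by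
  simpa [mul_comm] using ((hasDerivAt_id l).const_mul (2 * π)).sin

section CircleLoop

variable (u : ℍ[ℝ])

noncomputable def circleLoop (l : ℝ) : ℍ[ℝ] :=
  ((cos (2 * π * l) - 1 : ℝ) : ℍ[ℝ]) + sin (2 * π * l) • u

noncomputable def circleLoopHeight (l : ℝ) : ℍ[ℝ] :=
  (2 * sin (2 * π * l) - 4 * π * l) • u

lemma hasDerivAt_circleLoop (l : ℝ) :
    HasDerivAt (circleLoop u)
      ((-(2 * π * sin (2 * π * l)) : ℝ) + (2 * π * cos (2 * π * l)) • u) l :=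
  hasDerivAt_coe_add_smul u ((hasDerivAt_cos_two_pi_mul l).sub_const 1)
    (hasDerivAt_sin_two_pi_mul l)

@[simp] lemma circleLoop_zero : circleLoop u 0 = 0 := by simp [circleLoop]

@[simp] lemma circleLoop_one : circleLoop u 1 = 0 := by simp [circleLoop]

@[simp] lemma circleLoopHeight_zero : circleLoopHeight u 0 = 0 := by simp [circleLoopHeight]

@[simp] lemma circleLoopHeight_one : circleLoopHeight u 1 = (-(4 * π)) • u := by
  simp [circleLoopHeight]

end CircleLoop

lemma horizontalAt_circleLoop {u : ℍ[ℝ]} (hu : u.re = 0) (l : ℝ) :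
    HorizontalAt (circleLoop u) (circleLoopHeight u) l := by
  refine horizontalAt_coe_add_smul hu ((hasDerivAt_cos_two_pi_mul l).sub_const 1)
    (hasDerivAt_sin_two_pi_mul l) ?_
  refine (((hasDerivAt_sin_two_pi_mul l).const_mul 2).sub
    ((hasDerivAt_id l).const_mul (4 * π))).congr_deriv ?_
  linear_combination (4 * π) * sin_sq_add_cos_sq (2 * π * l)

lemma isPiecewiseHorizontal_circleLoop {u : ℍ[ℝ]} (hu : u.re = 0) (a b : ℝ) :
    IsPiecewiseHorizontal (circleLoop u) (circleLoopHeight u) a b := by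
  refine isPiecewiseHorizontal_of_forall_horizontalAt (fun l ↦ by simp [circleLoopHeight, hu])
    (horizontalAt_circleLoop hu) ?_ a b
  rw [funext fun l ↦ (hasDerivAt_circleLoop u l).deriv]
  have := continuous_coe
  fun_prop

theorem exists_horizontal_curve_to_vertical_point (t : ℍ[ℝ]) (ht : t.re = 0) :
    ∃ α β : ℝ → ℍ[ℝ], IsPiecewiseHorizontal α β 0 1 ∧
      α 0 = 0 ∧ β 0 = 0 ∧ α 1 = 0 ∧ β 1 = t := by
  set u : ℍ[ℝ] := (-(4 * π)⁻¹) • t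
  have hu : u.re = 0 := by simp [u, ht]
  refine ⟨circleLoop u, circleLoopHeight u, isPiecewiseHorizontal_circleLoop hu 0 1,
    circleLoop_zero u, circleLoopHeight_zero u, circleLoop_one u, ?_⟩
  rw [circleLoopHeight_one, smul_smul, neg_mul_neg, mul_inv_cancel₀ (by positivity), one_smul]
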